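/- (Proposition 3.8) Suppose a discrete form Ω : ℤ⁴ → Cl satisfies equation (3.17): −DΩ = mΩe. Then Ω = ΩP_{−e} + ΩP_{+e}, where ΩP_{−e} satisfies the discrete Dirac–Kähler equation iD(ΩP_{−e}) = m(ΩP_{−e}), while ΩP_{+e} satisfies the same equation with reversed mass sign: iD(ΩP_{+e}) = −m(ΩP_{+e}). -/

import Mathlib

noncomputable section

/-- The Minkowski quadratic form `Q v = v₀² − v₁² − v₂² − v₃²` on `ℂ⁴`. -/
def Q : QuadraticForm ℂ (Fin 4 → ℂ) :=
  QuadraticMap.weightedSumSquares ℂ ![(1 : ℂ), -1, -1, -1]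

/-- The Clifford algebra of spacetime over `ℂ`. -/
abbrev Cl : Type := CliffordAlgebra Q

/-- The generators `e_μ`, images of the standard basis vectors. -/
def e (μ : Fin 4) : Cl := CliffordAlgebra.ι Q (Pi.single μ 1)

/-- The volume element `e = e₀e₁e₂e₃`. -/
def eV : Cl := e 0 * e 1 * e 2 * e 3

/-- The difference operator `(Δ_μ Ω)(k) = Ω(k + 1_μ) − Ω(k)`. -/
def Δ (μ : Fin 4) (Ω : (Fin 4 → ℤ) → Cl) : (Fin 4 → ℤ) → Cl :=
  fun k => Ω (k + Pi.single μ 1) - Ω k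

/-- The discrete Dirac operator `DΩ = Σ_μ e_μ · (Δ_μ Ω)`. -/
def Dirac (Ω : (Fin 4 → ℤ) → Cl) : (Fin 4 → ℤ) → Cl :=
  fun k => ∑ μ : Fin 4, e μ * Δ μ Ω k

def Pep : Cl := (2⁻¹ : ℂ) • (1 + Complex.I • eV)
def Pem : Cl := (2⁻¹ : ℂ) • (1 - Complex.I • eV)

/-! Since `e * e = -1`, the element `i e` is an involution, so `P_{−e}` and `P_{+e}` sum to `1`
and `e` acts on them from the left as `i` and `-i`. The Dirac operator differences and multiplies
from the left, hence commutes with right multiplication by a constant `c`; when `e c = z c`,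
the equation `−DΩ = mΩe` gives `iD(Ωc) = -i m Ω e c = -i z m (Ω c)`, which is `± m (Ω c)` for
`z = ±i`. -/

open Complex

lemma Q_single (μ : Fin 4) : Q (Pi.single μ 1) = ![(1 : ℂ), -1, -1, -1] μ := by
  simp [Q, QuadraticMap.weightedSumSquares_apply, Pi.single_apply]

lemma isOrtho_single {μ ν : Fin 4} (h : μ ≠ ν) : Q.IsOrtho (Pi.single μ 1) (Pi.single ν 1) := by
  rw [QuadraticMap.isOrtho_def]
  simp only [Q, QuadraticMap.weightedSumSquares_apply, ← Finset.sum_add_distrib]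
  refine Finset.sum_congr rfl fun i _ => ?_
  rcases eq_or_ne i μ with rfl | hμ <;> rcases eq_or_ne i ν with rfl | hν <;> simp_all

lemma e_mul_e_mul_of_lt {μ ν : Fin 4} (h : ν < μ) (x : Cl) :
    e μ * (e ν * x) = -(e ν * (e μ * x)) := by
  rw [← mul_assoc, e, e, CliffordAlgebra.ι_mul_ι_comm_of_isOrtho (isOrtho_single h.ne'),
    neg_mul, mul_assoc]

lemma e_mul_e_self (μ : Fin 4) : e μ * e μ = algebraMap ℂ Cl (![(1 : ℂ), -1, -1, -1] μ) := by
  rw [e, CliffordAlgebra.ι_sq_scalar, Q_single]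

lemma e_zero_mul_e_zero_mul (x : Cl) : e 0 * (e 0 * x) = x := by
  rw [← mul_assoc, e_mul_e_self]; simp

lemma e_mul_e_mul_of_ne_zero {μ : Fin 4} (h : μ ≠ 0) (x : Cl) : e μ * (e μ * x) = -x := by
  rw [← mul_assoc, e_mul_e_self]; fin_cases μ <;> simp_all

lemma eV_mul_eV : eV * eV = -1 := by
  -- six transpositions put the word `e₀e₁e₂e₃e₀e₁e₂e₃` in order; the squares give `1·(-1)³`
  rw [eV, ← mul_one (e 3)]
  simp (disch := decide) only [mul_assoc, e_mul_e_mul_of_lt, e_zero_mul_e_zero_mul,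
    e_mul_e_mul_of_ne_zero, one_mul, mul_neg, neg_neg]

section Projectors

variable {A : Type*} [Ring A] [Algebra ℂ A] {u : A}

lemma half_one_sub_add_half_one_add :
    (2⁻¹ : ℂ) • (1 - I • u) + (2⁻¹ : ℂ) • (1 + I • u) = 1 := by
  rw [← smul_add, sub_add_add_cancel, ← two_smul ℂ, smul_smul, inv_mul_cancel₀ two_ne_zero,
    one_smul]

lemma mul_half_one_sub_I_smul (hu : u * u = -1) :
    u * (2⁻¹ : ℂ) • (1 - I • u) = I • (2⁻¹ : ℂ) • (1 - I • u) := by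
  simp only [mul_smul_comm, mul_sub, mul_one, hu]
  match_scalars <;> grind [I_sq]

lemma mul_half_one_add_I_smul (hu : u * u = -1) :
    u * (2⁻¹ : ℂ) • (1 + I • u) = -I • (2⁻¹ : ℂ) • (1 + I • u) := by
  simp only [mul_smul_comm, mul_add, mul_one, hu]
  match_scalars <;> grind [I_sq]

end Projectors

lemma eV_mul_Pem : eV * Pem = I • Pem := mul_half_one_sub_I_smul eV_mul_eV

lemma eV_mul_Pep : eV * Pep = -I • Pep := mul_half_one_add_I_smul eV_mul_eV

lemma Dirac_mul_right (Ω : (Fin 4 → ℤ) → Cl) (c : Cl) (k : Fin 4 → ℤ) :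
    Dirac (fun k => Ω k * c) k = Dirac Ω k * c := by
  simp only [Dirac, Δ, Finset.sum_mul, sub_mul, mul_assoc]

lemma I_smul_Dirac_mul_right_of_eV_mul {m : ℂ} {Ω : (Fin 4 → ℤ) → Cl}
    (hΩ : ∀ k, -(Dirac Ω k) = m • (Ω k * eV)) {c : Cl} {z : ℂ} (hc : eV * c = z • c)
    (k : Fin 4 → ℤ) : I • Dirac (fun k => Ω k * c) k = (-(I * z) * m) • (Ω k * c) := by
  rw [Dirac_mul_right, ← neg_neg (Dirac Ω k), hΩ k, neg_mul, smul_mul_assoc, mul_assoc, hc,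
    mul_smul_comm, smul_smul, smul_neg, smul_smul, ← neg_smul, neg_mul, mul_comm m, mul_assoc]

/-- Proposition 3.8: a solution `Ω` of `−DΩ = mΩe` decomposes as
`Ω = ΩP_{−e} + ΩP_{+e}`, where `ΩP_{−e}` satisfies the discrete Dirac–Kähler
equation and `ΩP_{+e}` satisfies it with reversed mass sign. -/
theorem stmt_13 (m : ℝ) (Ω : (Fin 4 → ℤ) → Cl)
    (hΩ : ∀ k, -(Dirac Ω k) = (m : ℂ) • (Ω k * eV)) :
    (∀ k, Ω k = Ω k * Pem + Ω k * Pep) ∧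
    (∀ k, Complex.I • Dirac (fun k => Ω k * Pem) k = (m : ℂ) • (Ω k * Pem)) ∧
    (∀ k, Complex.I • Dirac (fun k => Ω k * Pep) k = -((m : ℂ) • (Ω k * Pep))) := by
  refine ⟨fun k => ?_, fun k => ?_, fun k => ?_⟩
  · rw [← mul_add, Pem, Pep, half_one_sub_add_half_one_add, mul_one]
  · rw [I_smul_Dirac_mul_right_of_eV_mul hΩ eV_mul_Pem, I_mul_I, neg_neg, one_mul]
  · rw [I_smul_Dirac_mul_right_of_eV_mul hΩ eV_mul_Pep, mul_neg, I_mul_I,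
      neg_neg, neg_mul, one_mul, neg_smul]
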